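/- arXiv:1011.3084 — 2 statements merged into one kernel-verified Lean document; each statement's English description precedes it below -/
import Mathlib

section
/- For the cross product on ℝ⁷ defined by the 3-form φ₀, the norm identity |y × z|² = |y|²|z|² − ⟨y,z⟩² holds for all y, z ∈ ℝ⁷; i.e. |y × z| equals the norm of the simple 2-vector y ∧ z. -/
open scoped RealInnerProductSpace
open Finset

noncomputable section

/-- ℝ⁷ with its standard inner product. -/
abbrev E7 := EuclideanSpace ℝ (Fin 7)

/-- standard orthonormal basis vectors e₁,…,e₇ (0-indexed). -/
def e (i : Fin 7) : E7 := EuclideanSpace.single i 1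

/-- the 3×3 minor ε^{abc}(x,y,z) (a determinant of components). -/
def tdet (a b c : Fin 7) (x y z : E7) : ℝ :=
  Matrix.det !![x a, x b, x c; y a, y b, y c; z a, z b, z c]

/-- the standard G₂ 3-form φ₀ = ε¹²³ + ε¹∧(ε⁴⁵−ε⁶⁷) + ε²∧(ε⁴⁶−ε⁷⁵) + ε³∧(ε⁴⁷−ε⁵⁶),
with indices shifted to be 0-based. -/
def phi0 (x y z : E7) : ℝ :=
  tdet 0 1 2 x y z + (tdet 0 3 4 x y z - tdet 0 5 6 x y z)
    + (tdet 1 3 5 x y z - tdet 1 6 4 x y z)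
    + (tdet 2 3 6 x y z - tdet 2 4 5 x y z)

/-- the cross product on ℝ⁷: the unique vector with ⟨x × y, z⟩ = φ₀(x,y,z). -/
def cross (x y : E7) : E7 := (WithLp.equiv 2 _).symm (fun i => phi0 x y (e i))

lemma c0 (y z : E7) : phi0 y z (e 0) = y 1 * z 2 + -(y 2 * z 1) + y 3 * z 4 + -(y 4 * z 3) + -(y 5 * z 6) + y 6 * z 5 := by
  simp [phi0, tdet, Matrix.det_fin_three, e, EuclideanSpace.single_apply]; ring
lemma c1 (y z : E7) : phi0 y z (e 1) = -(y 0 * z 2) + y 2 * z 0 + y 3 * z 5 + -(y 5 * z 3) + -(y 6 * z 4) + y 4 * z 6 := by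
  simp [phi0, tdet, Matrix.det_fin_three, e, EuclideanSpace.single_apply]; ring
lemma c2 (y z : E7) : phi0 y z (e 2) = y 0 * z 1 + -(y 1 * z 0) + y 3 * z 6 + -(y 6 * z 3) + -(y 4 * z 5) + y 5 * z 4 := by
  simp [phi0, tdet, Matrix.det_fin_three, e, EuclideanSpace.single_apply]; ring
lemma c3 (y z : E7) : phi0 y z (e 3) = -(y 0 * z 4) + y 4 * z 0 + -(y 1 * z 5) + y 5 * z 1 + -(y 2 * z 6) + y 6 * z 2 := by
  simp [phi0, tdet, Matrix.det_fin_three, e, EuclideanSpace.single_apply]; ring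
lemma c4 (y z : E7) : phi0 y z (e 4) = y 0 * z 3 + -(y 3 * z 0) + -(y 1 * z 6) + y 6 * z 1 + y 2 * z 5 + -(y 5 * z 2) := by
  simp [phi0, tdet, Matrix.det_fin_three, e, EuclideanSpace.single_apply]; ring
lemma c5 (y z : E7) : phi0 y z (e 5) = y 0 * z 6 + -(y 6 * z 0) + y 1 * z 3 + -(y 3 * z 1) + -(y 2 * z 4) + y 4 * z 2 := by
  simp [phi0, tdet, Matrix.det_fin_three, e, EuclideanSpace.single_apply]; ring
lemma c6 (y z : E7) : phi0 y z (e 6) = -(y 0 * z 5) + y 5 * z 0 + y 1 * z 4 + -(y 4 * z 1) + y 2 * z 3 + -(y 3 * z 2) := by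
  simp [phi0, tdet, Matrix.det_fin_three, e, EuclideanSpace.single_apply]; ring


set_option maxHeartbeats 1000000 in
/-- |y × z|² = |y|²|z|² − ⟨y,z⟩², i.e. |y × z| = |y ∧ z|. -/
theorem stmt1 (y z : E7) :
    ‖cross y z‖ ^ 2 = ‖y‖ ^ 2 * ‖z‖ ^ 2 - ⟪y, z⟫ ^ 2 := by
  have h : ∀ v : E7, ‖v‖ ^ 2 = ∑ i, v i ^ 2 := by
    intro v
    rw [← real_inner_self_eq_norm_sq, PiLp.inner_apply]
    simp [sq]
  have hc : ∀ i, cross y z i = phi0 y z (e i) := fun _ => rfl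
  rw [h, h, h, PiLp.inner_apply]
  simp only [Fin.sum_univ_seven, hc, c0, c1, c2, c3, c4, c5, c6, RCLike.inner_apply,
    conj_trivial]
  ring
end
end

section
/- The linear operator L(α) = ⋆(φ₀ ∧ α) on Λ²(ℝ⁷)* satisfies (L + 2·id)(L − id) = 0; equivalently, L² + L − 2·id = 0, so that Λ²(ℝ⁷)* decomposes as the direct sum of the eigenspace Λ²₇ for eigenvalue −2 and the eigenspace Λ²₁₄ for eigenvalue 1. -/
open scoped RealInnerProductSpace
open Finset

noncomputable section

/-- components of φ₀ in the standard basis. -/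
def phi0c (i j k : Fin 7) : ℝ := phi0 (e i) (e j) (e k)

/-- a function `Fin 7 → Fin 7 → ℝ` represents a 2-form (resp. 2-vector) by its
components iff it is antisymmetric. -/
def Alt2 (α : Fin 7 → Fin 7 → ℝ) : Prop := ∀ i j, α j i = - α i j

/-- components of the basis 2-form εⁱ∧εʲ. -/
def bf (i j a b : Fin 7) : ℝ :=
  (if a = i ∧ b = j then (1:ℝ) else 0) - (if a = j ∧ b = i then (1:ℝ) else 0)

/-- The operator L(α) = ⋆(φ₀ ∧ α) on 2-forms, expressed in components:
(L α)_{ij} is the coefficient of the volume form in the 7-form φ₀ ∧ α ∧ εⁱ∧εʲ,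
i.e. ⟨L α, γ⟩ vol = φ₀ ∧ α ∧ γ for all 2-forms γ. -/
def Lop (α : Fin 7 → Fin 7 → ℝ) (i j : Fin 7) : ℝ :=
  (1/24) * ∑ σ : Equiv.Perm (Fin 7),
    ((Equiv.Perm.sign σ : ℤ) : ℝ) * phi0c (σ 0) (σ 1) (σ 2) * α (σ 3) (σ 4) * bf i j (σ 5) (σ 6)

/-! ### auxiliary integer-level definitions -/

/-- sign factor. -/
def sg (a b : Fin 7) : ℤ := Int.sign ((b:ℤ) - (a:ℤ))

/-- the Levi-Civita symbol on 7 letters, as a product of signs of differences. -/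
def eps7 (x0 x1 x2 x3 x4 x5 x6 : Fin 7) : ℤ :=
  sg x0 x1 * sg x0 x2 * sg x0 x3 * sg x0 x4 * sg x0 x5 * sg x0 x6 *
  sg x1 x2 * sg x1 x3 * sg x1 x4 * sg x1 x5 * sg x1 x6 *
  sg x2 x3 * sg x2 x4 * sg x2 x5 * sg x2 x6 *
  sg x3 x4 * sg x3 x5 * sg x3 x6 *
  sg x4 x5 * sg x4 x6 * sg x5 x6

theorem sg_swap (a b : Fin 7) : sg b a = - sg a b := by
  unfold sg; rw [← Int.sign_neg, neg_sub]

/-- integer contraction of φ₀ with the Levi-Civita symbol. -/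
def NZ (k l i j : Fin 7) : ℤ :=
  eps7 0 1 2 k l i j + (eps7 0 3 4 k l i j - eps7 0 5 6 k l i j)
    + (eps7 1 3 5 k l i j - eps7 1 6 4 k l i j)
    + (eps7 2 3 6 k l i j - eps7 2 4 5 k l i j)

/-- components of the 4-form ψ = ⋆φ₀, stored as base-3 digits of one big numeral. -/
def bigT : Nat := 184970549289715880149106614832643732311550942531170364666759340347216354639350232839665674804406601327969442418951454389171810547806940140708845862575315681718216824759777891002730956557126747363974785958356133829204128217231197401564355280314039274759227115940362541942971180780648362412636983066478451050832230009436244630920960440893608494603833280221001551962972503086719837205776367951068560347415649505883043571912422482354479815215356603467641404843026191754891104152261671923830740093898729131119454687540237692070877043739749880806650273282774452712935579685457636945657334326063991283320428758558660245239754438397240677852878324344884877200131052934671301117202501336591927380049090985906326337341638270518869061218236300920922012884259387177595247789280940289040626901593471077758780966886515044138581680810319998727600695798166100683977094429856927993160346907964158155819314175314068155116506146080565823357728218754142463678546923460823061672422392617949479128853939523327470604970693121779392207092910872648665679117865461442250578029949057600858340436057855335821225681684149180742439501965297490351679716777114520761495005960001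

def psiT (k l i j : Fin 7) : ℤ :=
  ((bigT / 3 ^ (k.val * 343 + l.val * 49 + i.val * 7 + j.val)) % 3 : ℕ) - 1

def dd2 (i j k l : Fin 7) : ℤ :=
  (if k = i ∧ l = j then 1 else 0) - (if k = j ∧ l = i then 1 else 0)

/-- real Kronecker delta. -/
def D (u v : Fin 7) : ℝ := if u = v then 1 else 0

/-! ### computational facts (kernel computation) -/

set_option maxRecDepth 40000 in
set_option maxHeartbeats 4000000 in
theorem NZ_eq : ∀ k l i j : Fin 7, NZ k l i j - NZ k l j i = 2 * psiT k l i j := by decide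

set_option maxRecDepth 40000 in
set_option maxHeartbeats 4000000 in
theorem main_int : ∀ k l i j : Fin 7,
    (∑ ab : Fin 7 × Fin 7, psiT k l ab.1 ab.2 * psiT ab.1 ab.2 i j) + 2 * psiT k l i j
      = 4 * dd2 i j k l := by decide

/-! ### Levi-Civita basics -/

theorem eps7_swap01 (a b x2 x3 x4 x5 x6 : Fin 7) :
    eps7 b a x2 x3 x4 x5 x6 = - eps7 a b x2 x3 x4 x5 x6 := by
  unfold eps7; rw [sg_swap a b]; ring

theorem eps7_swap12 (a b c x3 x4 x5 x6 : Fin 7) :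
    eps7 a c b x3 x4 x5 x6 = - eps7 a b c x3 x4 x5 x6 := by
  unfold eps7; rw [sg_swap b c]; ring

theorem eps7_six (a b c k l u v : Fin 7) :
    eps7 a b c k l u v - eps7 a c b k l u v - (eps7 b a c k l u v - eps7 b c a k l u v)
      + (eps7 c a b k l u v - eps7 c b a k l u v)
      = 6 * eps7 a b c k l u v := by
  have h1 : eps7 a c b k l u v = -eps7 a b c k l u v := eps7_swap12 a b c k l u v
  have h2 : eps7 b a c k l u v = -eps7 a b c k l u v := eps7_swap01 a b c k l u v
  have h3 : eps7 b c a k l u v = eps7 a b c k l u v := by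
    rw [eps7_swap12 b a c k l u v, h2]; ring
  have h4 : eps7 c a b k l u v = eps7 a b c k l u v := by
    rw [eps7_swap01 a c b k l u v, h1]; ring
  have h5 : eps7 c b a k l u v = -eps7 a b c k l u v := by
    rw [eps7_swap01 b c a k l u v, h3]
  rw [h1, h2, h3, h4, h5]; ring

/-! ### the determinant lemma : signed sums of delta-monomials give the Levi-Civita symbol -/

theorem eps7_sign_prod (x : Fin 7 → Fin 7) :
    eps7 (x 0) (x 1) (x 2) (x 3) (x 4) (x 5) (x 6)
      = Int.sign (∏ i : Fin 7, ∏ j ∈ Finset.Ioi i, ((x j : ℤ) - (x i : ℤ))) := by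
  have hIoi : ∀ m : Fin 7, Finset.Ioi m = Finset.univ.filter (fun n => m < n) := by
    intro m; ext n; simp
  conv_rhs => rw [Fin.prod_univ_seven]
  simp only [hIoi, Finset.prod_filter, Fin.prod_univ_seven]
  simp only [Fin.reduceLT, reduceIte, one_mul, mul_one]
  simp only [Int.sign_mul]
  unfold eps7 sg
  ring

theorem key1 (x0 x1 x2 x3 x4 x5 x6 : Fin 7) :
    ∑ σ : Equiv.Perm (Fin 7), ((Equiv.Perm.sign σ : ℤ) : ℝ) *
      (D x0 (σ 0) * D x1 (σ 1) * D x2 (σ 2) *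
        (D x3 (σ 3) * D x4 (σ 4) * (D x5 (σ 5) * D x6 (σ 6))))
    = ((eps7 x0 x1 x2 x3 x4 x5 x6 : ℤ) : ℝ) := by
  classical
  set x : Fin 7 → Fin 7 := ![x0, x1, x2, x3, x4, x5, x6] with hx
  have hx0 : x 0 = x0 := rfl
  have hx1 : x 1 = x1 := rfl
  have hx2 : x 2 = x2 := rfl
  have hx3 : x 3 = x3 := rfl
  have hx4 : x 4 = x4 := rfl
  have hx5 : x 5 = x5 := rfl
  have hx6 : x 6 = x6 := rfl
  have heps : eps7 x0 x1 x2 x3 x4 x5 x6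
      = Int.sign (∏ i : Fin 7, ∏ j ∈ Finset.Ioi i, ((x j : ℤ) - (x i : ℤ))) := by
    rw [← hx0, ← hx1, ← hx2, ← hx3, ← hx4, ← hx5, ← hx6]; exact eps7_sign_prod x
  have hsum : (∑ σ : Equiv.Perm (Fin 7), ((Equiv.Perm.sign σ : ℤ) : ℝ) *
      (D x0 (σ 0) * D x1 (σ 1) * D x2 (σ 2) *
        (D x3 (σ 3) * D x4 (σ 4) * (D x5 (σ 5) * D x6 (σ 6)))))
      = (Matrix.of fun a b => D (x b) a).det := by
    rw [Matrix.det_apply]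
    apply Finset.sum_congr rfl
    intro σ _
    rw [Fin.prod_univ_seven]
    simp only [Matrix.of_apply, Units.smul_def, zsmul_eq_mul]
    rw [← hx0, ← hx1, ← hx2, ← hx3, ← hx4, ← hx5, ← hx6]
    ring
  rw [hsum, heps]
  by_cases hinj : Function.Injective x
  · have hbij : Function.Bijective x := Finite.injective_iff_bijective.mp hinj
    set ep : Equiv.Perm (Fin 7) := Equiv.ofBijective x hbij with hep
    have hxe : ∀ m, x m = ep m := fun m => rfl
    have hdet : (Matrix.of fun a b => D (x b) a).det = ((Equiv.Perm.sign ep : ℤ) : ℝ) := by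
      have hM : (Matrix.of fun a b => D (x b) a)
          = (1 : Matrix (Fin 7) (Fin 7) ℝ).submatrix id ⇑ep := by
        ext a b
        simp [D, Matrix.one_apply, hxe, eq_comm]
      rw [hM, Matrix.det_permute', Matrix.det_one, mul_one]
    have hvan : (∏ i : Fin 7, ∏ j ∈ Finset.Ioi i, ((x j : ℤ) - (x i : ℤ)))
        = ((Equiv.Perm.sign ep : ℤ)) * ∏ i : Fin 7, ∏ j ∈ Finset.Ioi i, ((j : ℤ) - (i : ℤ)) := by
      have h1 : Matrix.vandermonde (fun m : Fin 7 => ((x m : ℤ)))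
          = (Matrix.vandermonde (fun m : Fin 7 => ((m : ℤ)))).submatrix ⇑ep id := by
        ext a b
        simp [Matrix.vandermonde_apply, hxe]
      have h2 := Matrix.det_vandermonde (fun m : Fin 7 => ((x m : ℤ)))
      rw [h1, Matrix.det_permute, Matrix.det_vandermonde] at h2
      exact_mod_cast h2.symm
    have hQ : 0 < ∏ i : Fin 7, ∏ j ∈ Finset.Ioi i, ((j : ℤ) - (i : ℤ)) := by
      apply Finset.prod_pos
      intro i _
      apply Finset.prod_pos
      intro j hj
      have : i < j := Finset.mem_Ioi.mp hj
      have : (i : ℤ) < (j : ℤ) := by exact_mod_cast this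
      omega
    rw [hdet, hvan, Int.sign_mul]
    rcases Int.units_eq_one_or (Equiv.Perm.sign ep) with h | h <;>
      simp [h, Int.sign_eq_one_iff_pos.mpr hQ]
  · obtain ⟨m, n, hmn, hne⟩ : ∃ m n, x m = x n ∧ m ≠ n := by
      simp only [Function.Injective, not_forall] at hinj
      obtain ⟨m, n, h1, h2⟩ := hinj
      exact ⟨m, n, h1, h2⟩
    have hdet : (Matrix.of fun a b => D (x b) a).det = 0 := by
      apply Matrix.det_zero_of_column_eq hne
      intro k
      simp [D, hmn]
    have hzero : (∏ i : Fin 7, ∏ j ∈ Finset.Ioi i, ((x j : ℤ) - (x i : ℤ))) = 0 := by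
      rcases hne.lt_or_gt with h | h
      · exact Finset.prod_eq_zero (Finset.mem_univ m)
          (Finset.prod_eq_zero (Finset.mem_Ioi.mpr h) (by rw [hmn]; ring))
      · exact Finset.prod_eq_zero (Finset.mem_univ n)
          (Finset.prod_eq_zero (Finset.mem_Ioi.mpr h) (by rw [hmn]; ring))
    rw [hdet, hzero]
    simp

/-! ### expansion of φ₀ components into delta monomials -/

def T3 (p q r a b c : Fin 7) : ℝ :=
  D p a * (D q b * D r c - D r b * D q c) - D q a * (D p b * D r c - D r b * D p c)
    + D r a * (D p b * D q c - D q b * D p c)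

theorem tdet_expand (p q r a b c : Fin 7) :
    tdet p q r (e a) (e b) (e c) = T3 p q r a b c := by
  unfold tdet T3 D e
  rw [Matrix.det_fin_three]
  simp [EuclideanSpace.single_apply, -mul_ite, -ite_mul, -boole_mul, -mul_boole]
  ring

theorem phi0c_expand (a b c : Fin 7) :
    phi0c a b c =
      T3 0 1 2 a b c + (T3 0 3 4 a b c - T3 0 5 6 a b c) + (T3 1 3 5 a b c - T3 1 6 4 a b c)
        + (T3 2 3 6 a b c - T3 2 4 5 a b c) := by
  unfold phi0c phi0
  rw [tdet_expand, tdet_expand, tdet_expand, tdet_expand, tdet_expand, tdet_expand, tdet_expand]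

/-! ### the σ-sums against φ₀ -/

theorem key1' (p q r k l u v : Fin 7) :
    ∑ σ : Equiv.Perm (Fin 7), ((Equiv.Perm.sign σ : ℤ) : ℝ) *
      (T3 p q r (σ 0) (σ 1) (σ 2) * (D k (σ 3) * D l (σ 4) * (D u (σ 5) * D v (σ 6))))
    = ((6 * eps7 p q r k l u v : ℤ) : ℝ) := by
  have step : ∀ σ : Equiv.Perm (Fin 7), ((Equiv.Perm.sign σ : ℤ) : ℝ) *
      (T3 p q r (σ 0) (σ 1) (σ 2) * (D k (σ 3) * D l (σ 4) * (D u (σ 5) * D v (σ 6))))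
      = ((Equiv.Perm.sign σ : ℤ) : ℝ) *
          (D p (σ 0) * D q (σ 1) * D r (σ 2) * (D k (σ 3) * D l (σ 4) * (D u (σ 5) * D v (σ 6))))
        - ((Equiv.Perm.sign σ : ℤ) : ℝ) *
          (D p (σ 0) * D r (σ 1) * D q (σ 2) * (D k (σ 3) * D l (σ 4) * (D u (σ 5) * D v (σ 6))))
        - (((Equiv.Perm.sign σ : ℤ) : ℝ) *
          (D q (σ 0) * D p (σ 1) * D r (σ 2) * (D k (σ 3) * D l (σ 4) * (D u (σ 5) * D v (σ 6))))
          - ((Equiv.Perm.sign σ : ℤ) : ℝ) *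
          (D q (σ 0) * D r (σ 1) * D p (σ 2) * (D k (σ 3) * D l (σ 4) * (D u (σ 5) * D v (σ 6)))))
        + (((Equiv.Perm.sign σ : ℤ) : ℝ) *
          (D r (σ 0) * D p (σ 1) * D q (σ 2) * (D k (σ 3) * D l (σ 4) * (D u (σ 5) * D v (σ 6))))
          - ((Equiv.Perm.sign σ : ℤ) : ℝ) *
          (D r (σ 0) * D q (σ 1) * D p (σ 2) * (D k (σ 3) * D l (σ 4) * (D u (σ 5) * D v (σ 6)))))
      := by
    intro σ; unfold T3; ring
  rw [Finset.sum_congr rfl fun σ _ => step σ]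
  simp only [Finset.sum_sub_distrib, Finset.sum_add_distrib]
  rw [key1, key1, key1, key1, key1, key1]
  have h := congrArg (fun z : ℤ => (z : ℝ)) (eps7_six p q r k l u v)
  push_cast at h ⊢
  linarith [h]

theorem key2 (k l u v : Fin 7) :
    ∑ σ : Equiv.Perm (Fin 7), ((Equiv.Perm.sign σ : ℤ) : ℝ) *
      (phi0c (σ 0) (σ 1) (σ 2) * (D k (σ 3) * D l (σ 4) * (D u (σ 5) * D v (σ 6))))
    = 6 * ((NZ k l u v : ℤ) : ℝ) := by
  have step : ∀ σ : Equiv.Perm (Fin 7), ((Equiv.Perm.sign σ : ℤ) : ℝ) *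
      (phi0c (σ 0) (σ 1) (σ 2) * (D k (σ 3) * D l (σ 4) * (D u (σ 5) * D v (σ 6))))
      = ((Equiv.Perm.sign σ : ℤ) : ℝ) *
          (T3 0 1 2 (σ 0) (σ 1) (σ 2) * (D k (σ 3) * D l (σ 4) * (D u (σ 5) * D v (σ 6))))
        + (((Equiv.Perm.sign σ : ℤ) : ℝ) *
          (T3 0 3 4 (σ 0) (σ 1) (σ 2) * (D k (σ 3) * D l (σ 4) * (D u (σ 5) * D v (σ 6))))
          - ((Equiv.Perm.sign σ : ℤ) : ℝ) *
          (T3 0 5 6 (σ 0) (σ 1) (σ 2) * (D k (σ 3) * D l (σ 4) * (D u (σ 5) * D v (σ 6)))))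
        + (((Equiv.Perm.sign σ : ℤ) : ℝ) *
          (T3 1 3 5 (σ 0) (σ 1) (σ 2) * (D k (σ 3) * D l (σ 4) * (D u (σ 5) * D v (σ 6))))
          - ((Equiv.Perm.sign σ : ℤ) : ℝ) *
          (T3 1 6 4 (σ 0) (σ 1) (σ 2) * (D k (σ 3) * D l (σ 4) * (D u (σ 5) * D v (σ 6)))))
        + (((Equiv.Perm.sign σ : ℤ) : ℝ) *
          (T3 2 3 6 (σ 0) (σ 1) (σ 2) * (D k (σ 3) * D l (σ 4) * (D u (σ 5) * D v (σ 6))))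
          - ((Equiv.Perm.sign σ : ℤ) : ℝ) *
          (T3 2 4 5 (σ 0) (σ 1) (σ 2) * (D k (σ 3) * D l (σ 4) * (D u (σ 5) * D v (σ 6)))))
      := by
    intro σ; rw [phi0c_expand]; ring
  rw [Finset.sum_congr rfl fun σ _ => step σ]
  simp only [Finset.sum_sub_distrib, Finset.sum_add_distrib]
  rw [key1', key1', key1', key1', key1', key1', key1']
  unfold NZ
  push_cast
  ring

/-! ### the structure of Lop -/

theorem D_flip (u v : Fin 7) : (if u = v then (1:ℝ) else 0) = D v u := by
  unfold D
  rcases eq_or_ne u v with rfl | h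
  · simp
  · simp [h, Ne.symm h]

theorem bf_eq (i j a b : Fin 7) : bf i j a b = D i a * D j b - D j a * D i b := by
  unfold bf
  have hand : ∀ (P Q : Prop) (_ : Decidable P) (_ : Decidable Q),
      (if P ∧ Q then (1:ℝ) else 0) = (if P then (1:ℝ) else 0) * (if Q then (1:ℝ) else 0) := by
    intro P Q hP hQ
    by_cases h1 : P <;> by_cases h2 : Q <;> simp [h1, h2]
  rw [hand, hand, D_flip a i, D_flip b j, D_flip a j, D_flip b i]

theorem alpha_expand (α : Fin 7 → Fin 7 → ℝ) (a b : Fin 7) :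
    α a b = ∑ kl : Fin 7 × Fin 7, α kl.1 kl.2 * (D kl.1 a * D kl.2 b) := by
  rw [Fintype.sum_prod_type]
  unfold D
  simp [ite_mul, mul_ite, Finset.sum_ite_eq', Finset.sum_ite_eq]

theorem Lop_struct (α : Fin 7 → Fin 7 → ℝ) (i j : Fin 7) :
    Lop α i j = ∑ kl : Fin 7 × Fin 7, α kl.1 kl.2 * (((psiT kl.1 kl.2 i j : ℤ) : ℝ) / 2) := by
  unfold Lop
  have step1 : ∀ σ : Equiv.Perm (Fin 7),
      ((Equiv.Perm.sign σ : ℤ) : ℝ) * phi0c (σ 0) (σ 1) (σ 2) * α (σ 3) (σ 4) * bf i j (σ 5) (σ 6)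
      = ∑ kl : Fin 7 × Fin 7, (α kl.1 kl.2 *
          (((Equiv.Perm.sign σ : ℤ) : ℝ) *
            (phi0c (σ 0) (σ 1) (σ 2) * (D kl.1 (σ 3) * D kl.2 (σ 4) * (D i (σ 5) * D j (σ 6)))))
        - α kl.1 kl.2 *
          (((Equiv.Perm.sign σ : ℤ) : ℝ) *
            (phi0c (σ 0) (σ 1) (σ 2) * (D kl.1 (σ 3) * D kl.2 (σ 4) * (D j (σ 5) * D i (σ 6)))))) := by
    intro σ
    rw [show α (σ 3) (σ 4) = ∑ kl : Fin 7 × Fin 7, α kl.1 kl.2 * (D kl.1 (σ 3) * D kl.2 (σ 4))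
      from alpha_expand α (σ 3) (σ 4), bf_eq]
    rw [Finset.mul_sum, Finset.sum_mul]
    apply Finset.sum_congr rfl
    intro kl _
    ring
  rw [Finset.sum_congr rfl fun σ _ => step1 σ, Finset.sum_comm]
  rw [Finset.mul_sum]
  apply Finset.sum_congr rfl
  intro kl _
  rw [Finset.sum_sub_distrib, ← Finset.mul_sum, ← Finset.mul_sum, key2, key2]
  have h := congrArg (fun z : ℤ => (z : ℝ)) (NZ_eq kl.1 kl.2 i j)
  push_cast at h
  linear_combination (α kl.1 kl.2 / 4) * h

/-! ### final assembly -/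

theorem sum_dd2 (α : Fin 7 → Fin 7 → ℝ) (hα : Alt2 α) (i j : Fin 7) :
    ∑ kl : Fin 7 × Fin 7, α kl.1 kl.2 * ((dd2 i j kl.1 kl.2 : ℤ) : ℝ) = 2 * α i j := by
  have hc : ∀ k l : Fin 7, ((dd2 i j k l : ℤ) : ℝ)
      = (if k = i ∧ l = j then (1:ℝ) else 0) - (if k = j ∧ l = i then (1:ℝ) else 0) := by
    intro k l
    unfold dd2
    push_cast [apply_ite (fun z : ℤ => (z : ℝ))]
    ring
  have h1 : ∀ (P : Prop) (_ : Decidable P) (f : Fin 7 → ℝ) (c : Fin 7),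
      (∑ x : Fin 7, if P then if x = c then f x else 0 else 0) = if P then f c else 0 := by
    intro P _ f c
    by_cases hP : P <;> simp [hP]
  rw [Fintype.sum_prod_type]
  simp only [hc, ite_and, mul_sub, mul_ite, mul_one, mul_zero, Finset.sum_sub_distrib, h1,
    Finset.sum_ite_eq', Finset.mem_univ, if_true]
  rw [hα i j]
  ring

theorem Lone (α : Fin 7 → Fin 7 → ℝ) (hα : Alt2 α) (i j : Fin 7) :
    Lop (Lop α) i j + Lop α i j - 2 * α i j = 0 := by
  have h2 : Lop (Lop α) i j
      = ∑ kl : Fin 7 × Fin 7, α kl.1 kl.2 *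
        (((∑ ab : Fin 7 × Fin 7, psiT kl.1 kl.2 ab.1 ab.2 * psiT ab.1 ab.2 i j : ℤ) : ℝ) / 4) := by
    rw [Lop_struct (Lop α) i j]
    have hab : ∀ ab : Fin 7 × Fin 7, Lop α ab.1 ab.2 * (((psiT ab.1 ab.2 i j : ℤ) : ℝ) / 2)
        = ∑ kl : Fin 7 × Fin 7, α kl.1 kl.2 *
            (((psiT kl.1 kl.2 ab.1 ab.2 : ℤ) : ℝ) / 2 * (((psiT ab.1 ab.2 i j : ℤ) : ℝ) / 2)) := by
      intro ab
      rw [Lop_struct α ab.1 ab.2, Finset.sum_mul]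
      exact Finset.sum_congr rfl fun kl _ => by ring
    rw [Finset.sum_congr rfl fun ab _ => hab ab, Finset.sum_comm]
    apply Finset.sum_congr rfl
    intro kl _
    rw [← Finset.mul_sum]
    congr 1
    push_cast
    rw [Finset.sum_div]
    exact Finset.sum_congr rfl fun ab _ => by ring
  rw [h2, Lop_struct α i j, ← Finset.sum_add_distrib]
  have hmerge : ∀ kl : Fin 7 × Fin 7,
      α kl.1 kl.2 *
        (((∑ ab : Fin 7 × Fin 7, psiT kl.1 kl.2 ab.1 ab.2 * psiT ab.1 ab.2 i j : ℤ) : ℝ) / 4)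
        + α kl.1 kl.2 * (((psiT kl.1 kl.2 i j : ℤ) : ℝ) / 2)
      = α kl.1 kl.2 * ((dd2 i j kl.1 kl.2 : ℤ) : ℝ) := by
    intro kl
    have h := congrArg (fun z : ℤ => (z : ℝ)) (main_int kl.1 kl.2 i j)
    push_cast at h ⊢
    linear_combination (α kl.1 kl.2 / 4) * h
  rw [Finset.sum_congr rfl fun kl _ => hmerge kl, sum_dd2 α hα i j]
  ring

theorem Lop_add (β γ : Fin 7 → Fin 7 → ℝ) (i j : Fin 7) :
    Lop (fun a b => β a b + γ a b) i j = Lop β i j + Lop γ i j := by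
  unfold Lop
  have hterm : ∀ σ : Equiv.Perm (Fin 7),
      ((Equiv.Perm.sign σ : ℤ) : ℝ) * phi0c (σ 0) (σ 1) (σ 2) * (β (σ 3) (σ 4) + γ (σ 3) (σ 4))
          * bf i j (σ 5) (σ 6)
      = ((Equiv.Perm.sign σ : ℤ) : ℝ) * phi0c (σ 0) (σ 1) (σ 2) * β (σ 3) (σ 4) * bf i j (σ 5) (σ 6)
        + ((Equiv.Perm.sign σ : ℤ) : ℝ) * phi0c (σ 0) (σ 1) (σ 2) * γ (σ 3) (σ 4) * bf i j (σ 5) (σ 6) :=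
    fun σ => by ring
  rw [Finset.sum_congr rfl fun σ _ => hterm σ, Finset.sum_add_distrib]
  ring

theorem Lop_smul (c : ℝ) (β : Fin 7 → Fin 7 → ℝ) (i j : Fin 7) :
    Lop (fun a b => c * β a b) i j = c * Lop β i j := by
  unfold Lop
  have hterm : ∀ σ : Equiv.Perm (Fin 7),
      ((Equiv.Perm.sign σ : ℤ) : ℝ) * phi0c (σ 0) (σ 1) (σ 2) * (c * β (σ 3) (σ 4))
          * bf i j (σ 5) (σ 6)
      = c * (((Equiv.Perm.sign σ : ℤ) : ℝ) * phi0c (σ 0) (σ 1) (σ 2) * β (σ 3) (σ 4)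
          * bf i j (σ 5) (σ 6)) :=
    fun σ => by ring
  rw [Finset.sum_congr rfl fun σ _ => hterm σ, ← Finset.mul_sum]
  ring

theorem Lop_alt (α : Fin 7 → Fin 7 → ℝ) (i j : Fin 7) : Lop α j i = - Lop α i j := by
  unfold Lop
  have hterm : ∀ σ : Equiv.Perm (Fin 7),
      ((Equiv.Perm.sign σ : ℤ) : ℝ) * phi0c (σ 0) (σ 1) (σ 2) * α (σ 3) (σ 4) * bf j i (σ 5) (σ 6)
      = - (((Equiv.Perm.sign σ : ℤ) : ℝ) * phi0c (σ 0) (σ 1) (σ 2) * α (σ 3) (σ 4)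
            * bf i j (σ 5) (σ 6)) := by
    intro σ
    unfold bf
    ring
  rw [Finset.sum_congr rfl fun σ _ => hterm σ, Finset.sum_neg_distrib]
  ring

/-- L(α) = ⋆(φ₀ ∧ α) satisfies L² + L − 2·id = 0 on 2-forms, so the
space of 2-forms decomposes as the direct sum of the eigenspaces Λ²₇ (eigenvalue −2)
and Λ²₁₄ (eigenvalue 1). -/
theorem stmt9 :
    (∀ α : Fin 7 → Fin 7 → ℝ, Alt2 α →
      ∀ i j, Lop (Lop α) i j + Lop α i j - 2 * α i j = 0) ∧
    (∀ α : Fin 7 → Fin 7 → ℝ, Alt2 α →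
      ∃! p : (Fin 7 → Fin 7 → ℝ) × (Fin 7 → Fin 7 → ℝ),
        Alt2 p.1 ∧ Alt2 p.2 ∧ (∀ i j, Lop p.1 i j = -2 * p.1 i j) ∧
        (∀ i j, Lop p.2 i j = p.2 i j) ∧ α = p.1 + p.2) := by
  constructor
  · exact fun α hα i j => Lone α hα i j
  · intro α hα
    have key : ∀ i j, Lop (Lop α) i j = 2 * α i j - Lop α i j := by
      intro i j
      have := Lone α hα i j
      linarith
    refine ⟨⟨fun a b => (α a b - Lop α a b) / 3, fun a b => (Lop α a b + 2 * α a b) / 3⟩,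
      ⟨?_, ?_, ?_, ?_, ?_⟩, ?_⟩
    · intro a b
      simp only
      rw [hα a b, Lop_alt α a b]
      ring
    · intro a b
      simp only
      rw [hα a b, Lop_alt α a b]
      ring
    · intro i j
      simp only
      have e1 : (fun a b => (α a b - Lop α a b) / 3)
          = fun a b => (1/3 : ℝ) * α a b + (1/3 : ℝ) * (-1 * Lop α a b) := by
        funext a b; ring
      rw [e1, Lop_add, Lop_smul, Lop_smul]
      have e2 : Lop (fun a b => -1 * Lop α a b) i j = -1 * Lop (Lop α) i j := Lop_smul _ _ i j
      rw [e2, key i j]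
      ring
    · intro i j
      simp only
      have e1 : (fun a b => (Lop α a b + 2 * α a b) / 3)
          = fun a b => (1/3 : ℝ) * Lop α a b + (2/3 : ℝ) * α a b := by
        funext a b; ring
      rw [e1, Lop_add, Lop_smul, Lop_smul, key i j]
      ring
    · funext a b
      show α a b = _
      simp only [Prod.fst, Prod.snd, Pi.add_apply]
      ring
    · rintro ⟨q1, q2⟩ ⟨hq1, hq2, hL1, hL2, hsum⟩
      have hs : ∀ a b, α a b = q1 a b + q2 a b := by
        intro a b
        rw [hsum]
        rfl
      have hLa : ∀ a b, Lop α a b = -2 * q1 a b + q2 a b := by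
        intro a b
        have e1 : α = fun a b => q1 a b + q2 a b := by funext a b; exact hs a b
        rw [e1, Lop_add, hL1, hL2]
      refine Prod.ext ?_ ?_ <;> simp only <;> funext a b
      · have h1 := hs a b
        have h2 := hLa a b
        linarith
      · have h1 := hs a b
        have h2 := hLa a b
        linarith
end
end
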